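/- arXiv:2010.07128 — 4 statements merged into one kernel-verified Lean document; each statement's English description precedes it below -/
import Mathlib

section
/- If (x, y) is an orthogonal pair of Euler elements in sl₂(ℝ), i.e., x and y are nonzero Euler elements with y ∈ g₁(x) ⊕ g₋₁(x), then also x ∈ g₁(y) ⊕ g₋₁(y), so that (y, x) is an orthogonal pair as well. -/
/-!
Every `X ∈ sl₂` satisfies `X² = -det X • 1`, hence `(ad X)³ = -4 det X • ad X`. As the centre of
`sl₂` is trivial, a (nonzero) Euler element therefore satisfies `X² = 1/4`. For such `X`,
`(ad X)² Y = Y/2 - 2 XYX`, so `(ad X)² Y = Y` holds exactly when `X` and `Y` anticommute,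
a condition symmetric in `X` and `Y`.
-/

/-- A nonzero element `h` of a real Lie algebra is an *Euler element* if `ad h` is
diagonalizable with eigenvalues in `{-1, 0, 1}`; over `ℝ` this is equivalent to the
polynomial identity `(ad h)^3 = ad h`. -/
def IsEuler {L : Type*} [LieRing L] [LieAlgebra ℝ L] (h : L) : Prop :=
  h ≠ 0 ∧ ∀ y : L, ⁅h, ⁅h, ⁅h, y⁆⁆⁆ = ⁅h, y⁆

/-- For an Euler element `h`, an element `y` lies in `g₁(h) ⊕ g₋₁(h)` if and only if
`(ad h)² y = y` (since `ker ((ad h)² - 1) = g₁(h) ⊕ g₋₁(h)`). -/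
def IsOrthogonalPair {L : Type*} [LieRing L] [LieAlgebra ℝ L] (h x : L) : Prop :=
  IsEuler h ∧ IsEuler x ∧ ⁅h, ⁅h, x⁆⁆ = x

open LieAlgebra.SpecialLinear Matrix

section Associative
variable {K A : Type*} [Ring A]

lemma lie_lie_lie_eq_smul_lie_of_mul_self_eq [CommRing K] [Algebra K A] {X : A} {c : K}
    (hX : X * X = c • 1) (Y : A) : ⁅X, ⁅X, ⁅X, Y⁆⁆⁆ = (4 * c) • ⁅X, Y⁆ := by
  calc ⁅X, ⁅X, ⁅X, Y⁆⁆⁆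
      = X * (X * X) * Y - 3 • ((X * X) * Y * X) + 3 • (X * Y * (X * X)) - Y * X * (X * X) := by
        simp only [Ring.lie_def]; noncomm_ring
    _ = (4 * c) • ⁅X, Y⁆ := by
        simp only [hX, Ring.lie_def, smul_mul_assoc, mul_smul_comm, mul_one, one_mul]
        module

lemma lie_lie_eq_self_iff_add_eq_zero [Field K] [CharZero K] [Algebra K A] {X : A}
    (hX : X * X = (1 / 4 : K) • 1) (Y : A) : ⁅X, ⁅X, Y⁆⁆ = Y ↔ X * Y + Y * X = 0 := by
  have hlie : ⁅X, ⁅X, Y⁆⁆ = (1 / 2 : K) • Y - 2 • (X * Y * X) := by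
    calc ⁅X, ⁅X, Y⁆⁆ = (X * X) * Y - 2 • (X * Y * X) + Y * (X * X) := by
          simp only [Ring.lie_def]; noncomm_ring
      _ = _ := by
          simp only [hX, smul_mul_assoc, mul_smul_comm, mul_one, one_mul]
          module
  rw [hlie]
  constructor
  · intro h
    have hXYX : 4 • (X * Y * X) = -Y := by linear_combination (norm := module) (-2 : K) • h
    calc X * Y + Y * X = 4 • (X * Y * X) * X + Y * X := by
          rw [smul_mul_assoc, mul_assoc _ X X, hX, mul_smul_comm, mul_one]
          module
      _ = 0 := by rw [hXYX]; noncomm_ring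
  · intro h
    have hXYX : X * Y * X = -(1 / 4 : K) • Y := by
      rw [mul_assoc, eq_neg_of_add_eq_zero_right h, mul_neg, ← mul_assoc, hX, smul_mul_assoc,
        one_mul, neg_smul]
    rw [hXYX]
    module

end Associative

section SlTwo
variable {R : Type*} [CommRing R]

lemma sl_fin_two_val_one_one (X : sl (Fin 2) R) : X.val 1 1 = -X.val 0 0 := by
  have htr : X.val.trace = 0 := X.2
  rw [trace_fin_two] at htr
  linear_combination htr

lemma sl_fin_two_val_mul_self (X : sl (Fin 2) R) : X.val * X.val = (-X.val.det) • 1 := by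
  ext i j
  fin_cases i <;> fin_cases j <;>
    simp [mul_apply, det_fin_two, sl_fin_two_val_one_one X] <;> ring

lemma sl_fin_two_eq_zero_of_forall_lie_eq_zero [NoZeroDivisors R] [NeZero (2 : R)]
    {X : sl (Fin 2) R} (h : ∀ Y : sl (Fin 2) R, ⁅X, Y⁆ = 0) : X = 0 := by
  have hlie (i j : Fin 2) (hij : i ≠ j) : ⁅X.val, Matrix.single i j (1 : R)⁆ = 0 := by
    simpa using congrArg Subtype.val (h (single i j hij 1))
  have h10 : X.val 1 0 = 0 := by
    simpa [Ring.lie_def, mul_apply] using congrFun (congrFun (hlie 0 1 (by decide)) 0) 0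
  have h01 : X.val 0 1 = 0 := by
    simpa [Ring.lie_def, mul_apply] using congrFun (congrFun (hlie 1 0 (by decide)) 0) 0
  have h00 : 2 * X.val 0 0 = 0 := by
    simpa [Ring.lie_def, mul_apply, sl_fin_two_val_one_one X, ← two_mul] using
      congrFun (congrFun (hlie 0 1 (by decide)) 0) 1
  replace h00 := (mul_eq_zero.mp h00).resolve_left two_ne_zero
  ext i j
  fin_cases i <;> fin_cases j <;> simp [h00, h01, h10, sl_fin_two_val_one_one X]

end SlTwo

lemma IsEuler.val_mul_self {X : sl (Fin 2) ℝ} (hX : IsEuler X) :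
    X.val * X.val = (1 / 4 : ℝ) • 1 := by
  obtain ⟨hne, heuler⟩ := hX
  have hcube (Y : sl (Fin 2) ℝ) : ⁅X, ⁅X, ⁅X, Y⁆⁆⁆ = (4 * -X.val.det) • ⁅X, Y⁆ :=
    Subtype.ext (lie_lie_lie_eq_smul_lie_of_mul_self_eq (sl_fin_two_val_mul_self X) Y.val)
  have hdet : 4 * -X.val.det = 1 := by
    by_contra hdet
    refine hne (sl_fin_two_eq_zero_of_forall_lie_eq_zero fun Y => ?_)
    have : (4 * -X.val.det - 1) • ⁅X, Y⁆ = 0 := by rw [sub_smul, ← hcube, heuler, one_smul, sub_self]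
    exact (smul_eq_zero.mp this).resolve_left (sub_ne_zero.mpr hdet)
  rw [sl_fin_two_val_mul_self, show -X.val.det = 1 / 4 by linarith]

/-- If `(x, y)` is an orthogonal pair of Euler elements in `sl₂(ℝ)`
(i.e. `x, y` are nonzero Euler elements with `y ∈ g₁(x) ⊕ g₋₁(x)`), then also
`x ∈ g₁(y) ⊕ g₋₁(y)`, so `(y, x)` is an orthogonal pair as well. -/
theorem sl2_orthogonal_symm
    (x y : LieAlgebra.SpecialLinear.sl (Fin 2) ℝ)
    (hxy : IsOrthogonalPair x y) :
    IsOrthogonalPair y x := by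
  obtain ⟨hx, hy, horth⟩ := hxy
  have hanti : x.val * y.val + y.val * x.val = 0 :=
    (lie_lie_eq_self_iff_add_eq_zero hx.val_mul_self y.val).mp (congrArg Subtype.val horth)
  refine ⟨hy, hx, Subtype.ext ?_⟩
  exact (lie_lie_eq_self_iff_add_eq_zero hy.val_mul_self x.val).mpr ((add_comm _ _).trans hanti)
end

section
/- Let V be a finite-dimensional real vector space, Σ ⊆ V* ∖ {0} a finite set, and Π = (α₁, …, αₙ) a family in Σ forming a basis of V* such that every α ∈ Σ is a linear combination of α₁, …, αₙ whose coefficients are either all nonnegative integers or all nonpositive integers. Suppose β = Σⱼ cⱼαⱼ ∈ Σ with cⱼ ≥ 1 for all j. Let h ∈ V satisfy α(h) ∈ {−1, 0, 1} for all α ∈ Σ and αⱼ(h) ∈ {0, 1} for all j, and assume h ≠ 0. Then there is exactly one index j with αⱼ(h) = 1 (so αₖ(h) = 0 for k ≠ j, i.e., h is the fundamental coweight hⱼ), and for this index cⱼ = 1. -/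
/-!
Since `h ≠ 0` and the simple roots span the dual, some `αⱼ(h)` is nonzero, hence equal to `1`.
All terms of `β(h) = ∑ₖ cₖ αₖ(h)` are nonnegative, so `1 ≤ cⱼ ≤ β(h) ≤ 1`: this forces `cⱼ = 1`
and every other term to vanish, and `cₖ ≥ 1` then gives `αₖ(h) = 0` for `k ≠ j`.
-/

open Module

theorem Module.Dual.exists_apply_ne_zero_of_span_eq_top {R V ι : Type*} [CommSemiring R]
    [AddCommMonoid V] [Module R V] [Projective R V] {α : ι → Dual R V}
    (hspan : Submodule.span R (Set.range α) = ⊤) {v : V} (hv : v ≠ 0) :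
    ∃ i, α i v ≠ 0 := by
  obtain ⟨f, hf⟩ := Projective.exists_dual_ne_zero R hv
  by_contra! hα
  have hv_eval : Dual.eval R V v = 0 := LinearMap.ext_on_range hspan hα
  exact hf (LinearMap.congr_fun hv_eval f)

theorem Finset.eq_one_and_eq_zero_of_sum_mul_le_one {ι R : Type*} [Fintype ι] [Semiring R]
    [LinearOrder R] [IsStrictOrderedRing R] {c x : ι → R} (hc : ∀ k, 1 ≤ c k)
    (hx : ∀ k, 0 ≤ x k) {j : ι} (hxj : x j = 1) (hsum : ∑ k, c k * x k ≤ 1) :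
    c j = 1 ∧ ∀ k, k ≠ j → x k = 0 := by
  have hterm : ∀ k ∈ univ, 0 ≤ c k * x k :=
    fun k _ ↦ mul_nonneg (zero_le_one.trans (hc k)) (hx k)
  have hcj : c j = 1 := by
    refine le_antisymm ?_ (hc j)
    calc c j = c j * x j := by rw [hxj, mul_one]
      _ ≤ ∑ k, c k * x k := single_le_sum hterm (mem_univ j)
      _ ≤ 1 := hsum
  refine ⟨hcj, fun k hk ↦ le_antisymm ?_ (hx k)⟩
  have hpair := add_le_sum hterm (mem_univ j) (mem_univ k) hk.symm
  rw [hxj, hcj, mul_one] at hpair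
  exact nonpos_of_mul_nonpos_right ((add_le_iff_nonpos_right 1).mp (hpair.trans hsum))
    (zero_lt_one.trans_le (hc k))

theorem euler_element_is_fundamental_coweight_general
    {V : Type*} [AddCommGroup V] [Module ℝ V]
    (roots : Set (Module.Dual ℝ V))
    {n : ℕ} (α : Fin n → Module.Dual ℝ V)
    (hspan : Submodule.span ℝ (Set.range α) = ⊤)
    (β : Module.Dual ℝ V) (hβ : β ∈ roots)
    (c : Fin n → ℝ) (hβeq : β = ∑ j, c j • α j) (hc : ∀ j, 1 ≤ c j)
    (h : V) (hne : h ≠ 0)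
    (hvals : ∀ γ ∈ roots, γ h ∈ ({-1, 0, 1} : Set ℝ))
    (hPi : ∀ j, α j h ∈ ({0, 1} : Set ℝ)) :
    ∃ j : Fin n, α j h = 1 ∧ c j = 1 ∧ ∀ k : Fin n, k ≠ j → α k h = 0 := by
  obtain ⟨j, hj⟩ := Dual.exists_apply_ne_zero_of_span_eq_top hspan hne
  have hj1 : α j h = 1 := Or.resolve_left (hPi j) hj
  have hnonneg : ∀ k, 0 ≤ α k h := fun k ↦ by
    rcases hPi k with hk | hk <;> simp_all
  have hβle : β h ≤ 1 := by
    rcases hvals β hβ with hb | hb | hb <;> simp_all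
  have hβsum : β h = ∑ k, c k * α k h := by simp [hβeq]
  obtain ⟨hcj, hzero⟩ :=
    Finset.eq_one_and_eq_zero_of_sum_mul_le_one hc hnonneg hj1 (hβsum ▸ hβle)
  exact ⟨j, hj1, hcj, hzero⟩

/-- Let `V` be a finite-dimensional real vector space, `Σ ⊆ V* \ {0}` a
finite set and `Π = (α₁, …, αₙ)` a family in `Σ` forming a basis of `V*` such that every
`α ∈ Σ` is an integral linear combination of the `αⱼ` with coefficients all `≥ 0` or all
`≤ 0`.  Suppose `β = Σⱼ cⱼ αⱼ ∈ Σ` with `cⱼ ≥ 1` for all `j`.  If `h ∈ V` is nonzero with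
`α(h) ∈ {-1, 0, 1}` for all `α ∈ Σ` and `αⱼ(h) ∈ {0, 1}` for all `j`, then there is
exactly one index `j` with `αⱼ(h) = 1` (so `αₖ(h) = 0` for `k ≠ j`, i.e. `h` is the
fundamental coweight `hⱼ`), and for this index `cⱼ = 1`. -/
theorem euler_element_is_fundamental_coweight
    {V : Type*} [AddCommGroup V] [Module ℝ V] [FiniteDimensional ℝ V]
    (roots : Set (Module.Dual ℝ V)) (hfin : roots.Finite)
    (h0 : (0 : Module.Dual ℝ V) ∉ roots)
    {n : ℕ} (α : Fin n → Module.Dual ℝ V)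
    (hmem : ∀ j, α j ∈ roots)
    (hindep : LinearIndependent ℝ α)
    (hspan : Submodule.span ℝ (Set.range α) = ⊤)
    (hint : ∀ γ ∈ roots, ∃ m : Fin n → ℤ,
      γ = ∑ j, (m j : ℝ) • α j ∧ ((∀ j, 0 ≤ m j) ∨ (∀ j, m j ≤ 0)))
    (β : Module.Dual ℝ V) (hβ : β ∈ roots)
    (c : Fin n → ℝ) (hβeq : β = ∑ j, c j • α j) (hc : ∀ j, 1 ≤ c j)
    (h : V) (hne : h ≠ 0)
    (hvals : ∀ γ ∈ roots, γ h ∈ ({-1, 0, 1} : Set ℝ))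
    (hPi : ∀ j, α j h ∈ ({0, 1} : Set ℝ)) :
    ∃ j : Fin n, α j h = 1 ∧ c j = 1 ∧ ∀ k : Fin n, k ≠ j → α k h = 0 :=
  euler_element_is_fundamental_coweight_general roots α hspan β hβ c hβeq hc h hne hvals hPi
end

section
/- Let g be a finite-dimensional simple real Lie algebra and let (h, x) be an orthogonal pair of Euler elements, i.e., h and x are nonzero Euler elements with x ∈ g₁(h) ⊕ g₋₁(h). Then both h and x are symmetric: −h ∈ Inn(g)·h and −x ∈ Inn(g)·x. -/
/-- The exponential of an endomorphism of a finite-dimensional real vector space,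
computed via the entrywise exponential power series in a chosen basis (the result is
independent of this choice, since `exp` commutes with conjugation). -/
noncomputable def endExp {L : Type*} [AddCommGroup L] [Module ℝ L] [FiniteDimensional ℝ L]
    (f : Module.End ℝ L) : Module.End ℝ L :=
  letI := Classical.decEq (Module.Basis.ofVectorSpaceIndex ℝ L)
  Matrix.toLin (Module.Basis.ofVectorSpace ℝ L) (Module.Basis.ofVectorSpace ℝ L)
    (NormedSpace.exp
      (LinearMap.toMatrix (Module.Basis.ofVectorSpace ℝ L) (Module.Basis.ofVectorSpace ℝ L) f))

/-- `x` is conjugate to `z` under the group of inner automorphisms generated by the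
operators `exp (ad y)` with `y` ranging over the set `S`. -/
def InnConjIn {L : Type*} [LieRing L] [LieAlgebra ℝ L] [FiniteDimensional ℝ L]
    (S : Set L) (x z : L) : Prop :=
  ∃ l : List L, (∀ y ∈ l, y ∈ S) ∧
    ((l.map fun y => endExp (LieAlgebra.ad ℝ L y)).prod) x = z

/-- `x` is conjugate to `z` under `Inn(L) = ⟨exp (ad y) : y ∈ L⟩`. -/
def InnConj {L : Type*} [LieRing L] [LieAlgebra ℝ L] [FiniteDimensional ℝ L]
    (x z : L) : Prop :=
  ∃ l : List L, ((l.map fun y => endExp (LieAlgebra.ad ℝ L y)).prod) x = z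

/-- A Levi complement: a semisimple Lie subalgebra which is a vector-space complement
to the solvable radical. -/
def IsLeviComplement {L : Type*} [LieRing L] [LieAlgebra ℝ L] [FiniteDimensional ℝ L]
    (s : LieSubalgebra ℝ L) : Prop :=
  LieAlgebra.IsSemisimple ℝ s ∧
    IsCompl (LieAlgebra.radical ℝ L).toSubmodule s.toSubmodule

/-!
Put `z = ⁅h, x⁆`, `q = ⁅x, ⁅x, h⁆⁆`, `e = x + z` and `f = x - z`. Then `⁅q, e⁆ = e`,
`⁅q, f⁆ = -f`, `⁅e, f⁆ = 2q`, while `e ∈ g₁(h)`, `f ∈ g₋₁(h)` and `⁅h, q⁆ = 0`; hence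
`(ad e)³ = (ad f)³ = 0`. The inner automorphism `e^{ad(-e/2)} e^{ad f}`
maps `x = (e + f)/2` to `-q`, so `q` is an Euler element as well. Tracking eigenvalues through
`ad e` and `ad f` shows that `ad h` and `ad q` agree on `g₁(q) ⊕ g₋₁(q)`. The centralizer of
`g₁(q) ⊕ g₋₁(q)` is an ideal which does not contain `q`, so it vanishes by simplicity, and
therefore `h = q`. Now `(2h, e, f)` is an `sl₂`-triple, and its Weyl element
`e^{ad e} e^{-ad f} e^{ad e}` sends `h` to `-h` and `x = (e + f)/2` to `-x`.
-/

open LieAlgebra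
open scoped Nat

lemma Module.End.eq_zero_of_apply_eq_smul_of_cube_eq_self {K M : Type*} [Field K]
    [AddCommGroup M] [Module K M] {T : Module.End K M} (hT : ∀ v, T (T (T v)) = T v)
    {w : M} {c : K} (hw : T w = c • w) (hc : c ^ 3 ≠ c) : w = 0 := by
  have h3 : T (T (T w)) = c ^ 3 • w := by
    simp only [hw, map_smul, smul_smul]
    ring_nf
  have : (c ^ 3 - c) • w = 0 := by rw [sub_smul, ← h3, hT, hw, sub_self]
  exact (smul_eq_zero.mp this).resolve_left (sub_ne_zero.mpr hc)

lemma Module.End.induction_on_eigen_of_cube_eq_self {K M : Type*} [Field K] [CharZero K]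
    [AddCommGroup M] [Module K M] {T : Module.End K M} (hT : ∀ v, T (T (T v)) = T v)
    {W : Submodule K M} (hW : ∀ v ∈ W, T v ∈ W) {p : M → Prop}
    (add : ∀ a b, p a → p b → p (a + b))
    (eigen : ∀ c : K, (c = -1 ∨ c = 0 ∨ c = 1) → ∀ w ∈ W, T w = c • w → p w)
    {v : M} (hv : v ∈ W) : p v := by
  have hTT : T (T v) ∈ W := hW _ (hW v hv)
  have hsum : v = (2⁻¹ : K) • (T (T v) - T v) + (v - T (T v)) + (2⁻¹ : K) • (T (T v) + T v) := by
    module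
  rw [hsum]
  refine add _ _ (add _ _ ?_ ?_) ?_
  · refine eigen (-1) (by norm_num) _ (W.smul_mem _ (W.sub_mem hTT (hW v hv))) ?_
    rw [map_smul, map_sub, hT]; module
  · refine eigen 0 (by norm_num) _ (W.sub_mem hv hTT) ?_
    rw [map_sub, hT]; module
  · refine eigen 1 (by norm_num) _ (W.smul_mem _ (W.add_mem hTT (hW v hv))) ?_
    rw [map_smul, map_add, hT]; module

lemma endExp_eq_sum {V : Type*} [AddCommGroup V] [Module ℝ V] [FiniteDimensional ℝ V]
    {f : Module.End ℝ V} {k : ℕ} (hf : f ^ k = 0) :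
    endExp f = ∑ i ∈ Finset.range k, (i ! : ℝ)⁻¹ • f ^ i := by
  let _ := Classical.decEq (Module.Basis.ofVectorSpaceIndex ℝ V)
  let b := Module.Basis.ofVectorSpace ℝ V
  have hM : LinearMap.toMatrixAlgEquiv b f ^ k = 0 := by rw [← map_pow, hf, map_zero]
  have hexp : NormedSpace.exp (LinearMap.toMatrixAlgEquiv b f) =
      ∑ i ∈ Finset.range k, (i ! : ℝ)⁻¹ • LinearMap.toMatrixAlgEquiv b f ^ i := by
    rw [NormedSpace.exp_eq_tsum ℝ]
    refine tsum_eq_sum fun i hi => ?_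
    rw [pow_eq_zero_of_le (by simpa using hi) hM, smul_zero]
  have := congrArg (LinearMap.toMatrixAlgEquiv b).symm hexp
  simp only [map_sum, map_smul, map_pow, AlgEquiv.symm_apply_apply] at this
  rw [← this]
  rfl

section LieRing

variable {L : Type*} [LieRing L]

lemma lie_lie_eq_add_smul_of_lie_eq_smul {R : Type*} [CommRing R] [LieAlgebra R L]
    {t y w : L} {a c : R} (hy : ⁅t, y⁆ = a • y) (hw : ⁅t, w⁆ = c • w) :
    ⁅t, ⁅y, w⁆⁆ = (a + c) • ⁅y, w⁆ := by
  rw [leibniz_lie, hy, hw, smul_lie, lie_smul, add_smul]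

lemma ad_smul_pow_three_eq_zero {R : Type*} [CommRing R] [LieAlgebra R L] {y : L}
    (hy : ad R L y ^ 3 = 0) (c : R) : ad R L (c • y) ^ 3 = 0 := by
  rw [map_smul, smul_pow, hy, smul_zero]

lemma ad_neg_pow_three_eq_zero {R : Type*} [CommRing R] [LieAlgebra R L] {y : L}
    (hy : ad R L y ^ 3 = 0) : ad R L (-y) ^ 3 = 0 := by
  rw [map_neg, Odd.neg_pow (by decide), hy, neg_zero]

lemma lie_lie_lie_eq_zero_of_lie_lie_eq_self {h x : L} (hhx : ⁅h, ⁅h, x⁆⁆ = x) :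
    ⁅h, ⁅x, ⁅x, h⁆⁆⁆ = 0 := by
  have hxh : ⁅x, h⁆ = -⁅h, x⁆ := by rw [← lie_skew h x, neg_neg]
  rw [leibniz_lie, hxh, lie_neg, lie_self, neg_zero, zero_add, lie_neg, hhx, lie_neg, lie_self,
    neg_zero]

def IsAdTripotent (t : L) : Prop := ∀ y : L, ⁅t, ⁅t, ⁅t, y⁆⁆⁆ = ⁅t, y⁆

lemma IsAdTripotent.neg {t : L} (ht : IsAdTripotent t) : IsAdTripotent (-t) :=
  fun y => by simp only [neg_lie, lie_neg, neg_neg, ht y]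

lemma IsAdTripotent.map {R L' : Type*} [CommRing R] [LieAlgebra R L] [LieRing L']
    [LieAlgebra R L'] {t : L} (ht : IsAdTripotent t) (e : L ≃ₗ⁅R⁆ L') : IsAdTripotent (e t) := by
  intro y
  rw [← e.apply_symm_apply y, ← e.map_lie, ← e.map_lie, ← e.map_lie, ht, e.map_lie]

end LieRing

section RealLieAlgebra

variable {L : Type*} [LieRing L] [LieAlgebra ℝ L]

/-- Mathlib's exponential of a nilpotent derivation lives over `ℚ`, so `L` is viewed as a
`ℚ`-Lie algebra by restriction of scalars. -/
noncomputable def expAd (y : L) (hy : IsNilpotent (ad ℝ L y)) : L ≃ₗ⁅ℝ⁆ L :=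
  letI : Module ℚ L := Module.compHom L (algebraMap ℚ ℝ)
  letI : LieAlgebra ℚ L := ⟨fun q a b => lie_smul (q : ℝ) a b⟩
  LieDerivation.exp (LieDerivation.ad ℝ L y) (by simpa using hy)

lemma expAd_apply_eq_sum {y : L} {k : ℕ} (hk : ad ℝ L y ^ k = 0) (v : L) :
    expAd y (.mk _ k hk) v = ∑ i ∈ Finset.range k, (i ! : ℝ)⁻¹ • (ad ℝ L y ^ i) v := by
  let _ : Module ℚ L := Module.compHom L (algebraMap ℚ ℝ)
  let _ : LieAlgebra ℚ L := ⟨fun q a b => lie_smul (q : ℝ) a b⟩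
  simp only [expAd]
  rw [LieDerivation.exp_map_apply, LieDerivation.coe_ad_apply_eq_ad_apply,
    IsNilpotent.exp_eq_sum hk, LinearMap.sum_apply]
  refine Finset.sum_congr rfl fun i _ => ?_
  change algebraMap ℚ ℝ (i ! : ℚ)⁻¹ • (ad ℝ L y ^ i) v = _
  simp

lemma expAd_apply {y : L} (hy : ad ℝ L y ^ 3 = 0) (v : L) :
    expAd y (.mk _ 3 hy) v = v + ⁅y, v⁆ + (2⁻¹ : ℝ) • ⁅y, ⁅y, v⁆⁆ := by
  simp [expAd_apply_eq_sum hy, Finset.sum_range_succ, pow_two]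

noncomputable def weylAut (e f : L) (he : ad ℝ L e ^ 3 = 0) (hf : ad ℝ L f ^ 3 = 0) :
    L ≃ₗ⁅ℝ⁆ L :=
  (expAd e (.mk _ 3 he)).trans
    ((expAd (-f) (.mk _ 3 (ad_neg_pow_three_eq_zero hf))).trans (expAd e (.mk _ 3 he)))

section InnConj

variable [FiniteDimensional ℝ L]

lemma endExp_ad_eq_expAd {y : L} (hy : IsNilpotent (ad ℝ L y)) (v : L) :
    endExp (ad ℝ L y) v = expAd y hy v := by
  obtain ⟨k, hk⟩ := hy
  rw [expAd_apply_eq_sum hk, endExp_eq_sum hk, LinearMap.sum_apply]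
  rfl

lemma InnConj.refl (v : L) : InnConj v v := ⟨[], by simp⟩

lemma InnConj.expAd {u v : L} (huv : InnConj u v) (y : L) (hy : IsNilpotent (ad ℝ L y)) :
    InnConj u (expAd y hy v) := by
  obtain ⟨l, hl⟩ := huv
  refine ⟨y :: l, ?_⟩
  rw [List.map_cons, List.prod_cons, Module.End.mul_apply, hl, endExp_ad_eq_expAd]

lemma innConj_weylAut {e f : L} (he : ad ℝ L e ^ 3 = 0) (hf : ad ℝ L f ^ 3 = 0) (v : L) :
    InnConj v (weylAut e f he hf v) :=
  (((InnConj.refl v).expAd e _).expAd (-f) _).expAd e _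

end InnConj

lemma IsAdTripotent.eq_zero_of_lie_eq_smul {t w : L} {c : ℝ} (ht : IsAdTripotent t)
    (hw : ⁅t, w⁆ = c • w) (hc : c ^ 3 ≠ c) : w = 0 :=
  Module.End.eq_zero_of_apply_eq_smul_of_cube_eq_self (T := ad ℝ L t) ht hw hc

lemma IsAdTripotent.ad_pow_three_eq_zero {t y : L} (ht : IsAdTripotent t) (hy : ⁅t, y⁆ = y) :
    ad ℝ L y ^ 3 = 0 := by
  ext v
  refine Module.End.induction_on_eigen_of_cube_eq_self (T := ad ℝ L t) ht (W := ⊤)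
    (fun _ _ => Submodule.mem_top) (p := fun v => (ad ℝ L y ^ 3) v = 0)
    (fun a b ha hb => by simp only [map_add, ha, hb, add_zero]) ?_ Submodule.mem_top
  intro c hc w _ hw
  have hy' : ⁅t, y⁆ = (1 : ℝ) • y := by rw [one_smul, hy]
  have hshift := lie_lie_eq_add_smul_of_lie_eq_smul hy'
    (lie_lie_eq_add_smul_of_lie_eq_smul hy' (lie_lie_eq_add_smul_of_lie_eq_smul hy' hw))
  refine ht.eq_zero_of_lie_eq_smul hshift ?_
  rcases hc with rfl | rfl | rfl <;> norm_num

lemma IsEuler.isAdTripotent {t : L} (ht : IsEuler t) : IsAdTripotent t := ht.2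

lemma IsEuler.neg {t : L} (ht : IsEuler t) : IsEuler (-t) :=
  ⟨neg_ne_zero.mpr ht.1, ht.isAdTripotent.neg⟩

lemma IsEuler.map {L' : Type*} [LieRing L'] [LieAlgebra ℝ L'] {t : L} (ht : IsEuler t)
    (e : L ≃ₗ⁅ℝ⁆ L') : IsEuler (e t) :=
  ⟨by simpa using ht.1, ht.isAdTripotent.map e⟩

/-- The centralizer of `g₁(q) ⊕ g₋₁(q) = ker ((ad q)² - 1)`. -/
def IsAdTripotent.oddCentralizer {q : L} (hq : IsAdTripotent q) : LieIdeal ℝ L where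
  carrier := {y | ∀ m : L, ⁅q, ⁅q, m⁆⁆ = m → ⁅y, m⁆ = 0}
  add_mem' ha hb m hm := by rw [add_lie, ha m hm, hb m hm, add_zero]
  zero_mem' m _ := zero_lie m
  smul_mem' c y hy m hm := by rw [smul_lie, hy m hm, smul_zero]
  lie_mem {a y} hy m hm := by
    -- split `a` into its parts in `g₁(q) ⊕ g₋₁(q)` and in `g₀(q)`
    set a₁ := ⁅q, ⁅q, a⁆⁆
    have ha₁ : ⁅q, ⁅q, a₁⁆⁆ = a₁ := hq ⁅q, a⁆
    have ha₀ : ⁅q, a - a₁⁆ = 0 := by rw [lie_sub, hq a, sub_self]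
    have hm₀ : ⁅q, ⁅q, ⁅a - a₁, m⁆⁆⁆ = ⁅a - a₁, m⁆ := by
      simp only [leibniz_lie q (a - a₁), ha₀, zero_lie, zero_add, hm]
    have h₁ : ⁅y, ⁅a₁, m⁆⁆ = 0 := by
      rw [leibniz_lie, hy a₁ ha₁, hy m hm, zero_lie, lie_zero, add_zero]
    have h₀ : ⁅y, ⁅a - a₁, m⁆⁆ = 0 := hy _ hm₀
    rw [lie_lie, hy m hm, lie_zero, zero_sub, neg_eq_zero, ← sub_add_cancel a a₁, add_lie,
      lie_add, h₀, h₁, add_zero]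

lemma IsEuler.eq_zero_of_forall_lie_eq_zero [IsSimple ℝ L] {q y : L} (hq : IsEuler q)
    (hy : ∀ m : L, ⁅q, ⁅q, m⁆⁆ = m → ⁅y, m⁆ = 0) : y = 0 := by
  have hq' := hq.isAdTripotent
  rcases IsSimple.eq_bot_or_eq_top hq'.oddCentralizer with hbot | htop
  · have hmem : y ∈ hq'.oddCentralizer := hy
    simpa [hbot] using hmem
  · have hqq : ∀ m : L, ⁅q, ⁅q, m⁆⁆ = m → ⁅q, m⁆ = 0 := by
      have hmem : q ∈ hq'.oddCentralizer := htop ▸ LieSubmodule.mem_top q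
      exact hmem
    -- `ad q = (ad q)³` maps into `g₁(q) ⊕ g₋₁(q)`, so `q` would be central
    have hcentral : q ∈ center ℝ L := by
      refine (LieModule.mem_maxTrivSubmodule ℝ L L q).mpr fun v => ?_
      have h2 : ⁅q, ⁅q, v⁆⁆ = 0 := hqq _ (hq' v)
      rw [← lie_skew, ← hq' v, h2, lie_zero, neg_zero]
    rw [center_eq_bot ℝ L] at hcentral
    exact absurd ((LieSubmodule.mem_bot q).mp hcentral) hq.1

/-- The relations of the `sl₂`-triple `(2q, e, f)` in the sense of `IsSl2Triple`. -/
structure IsEulerSl2Triple (q e f : L) : Prop where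
  lie_q_e : ⁅q, e⁆ = e
  lie_q_f : ⁅q, f⁆ = -f
  lie_e_f : ⁅e, f⁆ = (2 : ℝ) • q

namespace IsEulerSl2Triple

variable {q e f : L}

lemma symm (t : IsEulerSl2Triple q e f) : IsEulerSl2Triple (-q) f e where
  lie_q_e := by rw [neg_lie, t.lie_q_f, neg_neg]
  lie_q_f := by rw [neg_lie, t.lie_q_e]
  lie_e_f := by rw [← lie_skew, t.lie_e_f, smul_neg]

lemma lie_e_lie_f (t : IsEulerSl2Triple q e f) (v : L) :
    ⁅e, ⁅f, v⁆⁆ = ⁅f, ⁅e, v⁆⁆ + (2 : ℝ) • ⁅q, v⁆ := by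
  rw [leibniz_lie, t.lie_e_f, smul_lie, add_comm]

/-- The eigenvalues `-1` and `0` of `ad h` on `g₁(q)` are ruled out by applying `ad e` and
`ad f`, which would produce eigenvalue `±2` of `ad h` or `ad q`. -/
lemma lie_eq_self_of_lie_eq_self (t : IsEulerSl2Triple q e f) {h : L} (hh : IsAdTripotent h)
    (hq : IsAdTripotent q) (hhq : ⁅h, q⁆ = 0) (hhf : ⁅h, f⁆ = -f) {w : L} (hw : ⁅q, w⁆ = w) :
    ⁅h, w⁆ = w := by
  have hf : ⁅h, f⁆ = (-1 : ℝ) • f := by rw [hhf, neg_one_smul]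
  have hqe : ⁅q, e⁆ = (1 : ℝ) • e := by rw [t.lie_q_e, one_smul]
  have hqf : ⁅q, f⁆ = (-1 : ℝ) • f := by rw [t.lie_q_f, neg_one_smul]
  have two_smul_eq_zero : ∀ u : L, (2 : ℝ) • u = 0 → u = 0 := fun u hu =>
    (smul_eq_zero.mp hu).resolve_left two_ne_zero
  refine Module.End.induction_on_eigen_of_cube_eq_self (T := ad ℝ L h) hh
    (W := (ad ℝ L q).eigenspace 1) ?_ (p := fun w => ⁅h, w⁆ = w)
    (fun a b ha hb => by simp only [lie_add, ha, hb]) ?_ (by simpa using hw)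
  · intro v hv
    rw [Module.End.mem_eigenspace_iff] at hv ⊢
    simp only [ad_apply] at hv ⊢
    rw [leibniz_lie, ← lie_skew q h, hhq, neg_zero, zero_lie, zero_add, hv, lie_smul]
  intro c hc w hw hhw
  simp only [Module.End.mem_eigenspace_iff, ad_apply] at hw hhw
  have hew : ⁅e, w⁆ = 0 :=
    hq.eq_zero_of_lie_eq_smul (lie_lie_eq_add_smul_of_lie_eq_smul hqe hw) (by norm_num)
  rcases hc with rfl | rfl | rfl
  · have hfw : ⁅f, w⁆ = 0 :=
      hh.eq_zero_of_lie_eq_smul (lie_lie_eq_add_smul_of_lie_eq_smul hf hhw) (by norm_num)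
    have hw0 : w = 0 := by
      apply two_smul_eq_zero
      have := t.lie_e_lie_f w
      rwa [hfw, hew, lie_zero, lie_zero, zero_add, hw, one_smul, eq_comm] at this
    rw [hw0, lie_zero]
  · have hffw : ⁅f, ⁅f, w⁆⁆ = 0 :=
      hh.eq_zero_of_lie_eq_smul (lie_lie_eq_add_smul_of_lie_eq_smul hf
        (lie_lie_eq_add_smul_of_lie_eq_smul hf hhw)) (by norm_num)
    have hqfw : ⁅q, ⁅f, w⁆⁆ = (0 : ℝ) • ⁅f, w⁆ := by
      rw [lie_lie_eq_add_smul_of_lie_eq_smul hqf hw]; norm_num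
    have hefw : ⁅e, ⁅f, w⁆⁆ = (2 : ℝ) • w := by
      rw [t.lie_e_lie_f, hew, lie_zero, zero_add, hw, one_smul]
    have hfw : ⁅f, w⁆ = 0 := by
      apply two_smul_eq_zero
      have := t.lie_e_lie_f ⁅f, w⁆
      rwa [hffw, hqfw, hefw, lie_zero, zero_smul, smul_zero, add_zero, lie_smul, eq_comm] at this
    have hw0 : w = 0 := two_smul_eq_zero w (by rw [← hefw, hfw, lie_zero])
    rw [hw0, lie_zero]
  · rw [hhw, one_smul]

/-- On `g₋₁(q)` this is `lie_eq_self_of_lie_eq_self` for the triple `(-q, f, e)`. -/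
lemma lie_eq_lie_of_lie_lie_eq_self (t : IsEulerSl2Triple q e f) {h : L} (hh : IsAdTripotent h)
    (hq : IsAdTripotent q) (hhq : ⁅h, q⁆ = 0) (hhe : ⁅h, e⁆ = e) (hhf : ⁅h, f⁆ = -f) {m : L}
    (hm : ⁅q, ⁅q, m⁆⁆ = m) : ⁅h, m⁆ = ⁅q, m⁆ := by
  have hplus : ⁅h, m + ⁅q, m⁆⁆ = m + ⁅q, m⁆ :=
    t.lie_eq_self_of_lie_eq_self hh hq hhq hhf (by rw [lie_add, hm, add_comm])
  have hminus : ⁅-h, m - ⁅q, m⁆⁆ = m - ⁅q, m⁆ :=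
    t.symm.lie_eq_self_of_lie_eq_self hh.neg hq.neg (by simp [hhq])
      (by rw [neg_lie, hhe]) (by rw [neg_lie, lie_sub, hm, neg_sub])
  rw [neg_lie, lie_sub] at hminus
  rw [lie_add] at hplus
  linear_combination (norm := module) (2⁻¹ : ℝ) • (hplus - hminus)

end IsEulerSl2Triple

lemma isEulerSl2Triple_of_lie_lie_eq_self {h x : L} (hx : IsAdTripotent x) (hhx : ⁅h, ⁅h, x⁆⁆ = x) :
    IsEulerSl2Triple ⁅x, ⁅x, h⁆⁆ (x + ⁅h, x⁆) (x - ⁅h, x⁆) := by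
  have hxz : ⁅x, ⁅h, x⁆⁆ = -⁅x, ⁅x, h⁆⁆ := by rw [← lie_skew h x, lie_neg]
  have hqx : ⁅⁅x, ⁅x, h⁆⁆, x⁆ = ⁅h, x⁆ := by rw [← lie_skew _ x, hx h]; exact lie_skew h x
  have hqz : ⁅⁅x, ⁅x, h⁆⁆, ⁅h, x⁆⁆ = x := by
    rw [leibniz_lie, ← lie_skew _ h, lie_lie_lie_eq_zero_of_lie_lie_eq_self hhx, neg_zero,
      zero_lie, zero_add, hqx, hhx]
  refine ⟨?_, ?_, ?_⟩
  · rw [lie_add, hqx, hqz, add_comm]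
  · rw [lie_sub, hqx, hqz, neg_sub]
  · have hzx : ⁅⁅h, x⁆, x⁆ = ⁅x, ⁅x, h⁆⁆ := by rw [← lie_skew, hxz, neg_neg]
    rw [add_lie, lie_sub, lie_sub, lie_self, lie_self, hxz, hzx]
    module

namespace IsEulerSl2Triple

variable {q e f : L}

lemma lie_f_e (t : IsEulerSl2Triple q e f) : ⁅f, e⁆ = -((2 : ℝ) • q) := by
  rw [← lie_skew, t.lie_e_f]

lemma lie_f_q (t : IsEulerSl2Triple q e f) : ⁅f, q⁆ = f := by
  rw [← lie_skew, t.lie_q_f, neg_neg]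

lemma lie_e_q (t : IsEulerSl2Triple q e f) : ⁅e, q⁆ = -e := by
  rw [← lie_skew, t.lie_q_e]

lemma expAd_smul_expAd_add (t : IsEulerSl2Triple q e f) (he : ad ℝ L e ^ 3 = 0)
    (hf : ad ℝ L f ^ 3 = 0) :
    expAd (-(2⁻¹ : ℝ) • e) (.mk _ 3 (ad_smul_pow_three_eq_zero he _))
      (expAd f (.mk _ 3 hf) (e + f)) = -((2 : ℝ) • q) := by
  simp only [expAd_apply hf, expAd_apply (ad_smul_pow_three_eq_zero he _), lie_add, lie_neg,
    lie_smul, smul_lie, lie_self, lie_zero, t.lie_f_e, t.lie_f_q, t.lie_e_q]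
  module

lemma weylAut_apply_q (t : IsEulerSl2Triple q e f) (he : ad ℝ L e ^ 3 = 0)
    (hf : ad ℝ L f ^ 3 = 0) : weylAut e f he hf q = -q := by
  simp only [weylAut, LieEquiv.trans_apply, expAd_apply he,
    expAd_apply (ad_neg_pow_three_eq_zero hf), lie_add, lie_neg, neg_lie, lie_smul, lie_self,
    lie_zero, t.lie_f_e, t.lie_f_q, t.lie_e_q, t.lie_e_f]
  module

lemma weylAut_apply_add (t : IsEulerSl2Triple q e f) (he : ad ℝ L e ^ 3 = 0)
    (hf : ad ℝ L f ^ 3 = 0) : weylAut e f he hf (e + f) = -(e + f) := by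
  simp only [weylAut, LieEquiv.trans_apply, expAd_apply he,
    expAd_apply (ad_neg_pow_three_eq_zero hf), lie_add, lie_neg, neg_lie, lie_smul, lie_self,
    lie_zero, t.lie_f_e, t.lie_f_q, t.lie_e_q, t.lie_e_f]
  module

end IsEulerSl2Triple

end RealLieAlgebra

/-- In a finite-dimensional simple real Lie algebra, if `(h, x)` is an
orthogonal pair of Euler elements, then both `h` and `x` are symmetric:
`-h ∈ Inn(g)·h` and `-x ∈ Inn(g)·x`. -/
theorem orthogonal_pair_symmetric
    {L : Type*} [LieRing L] [LieAlgebra ℝ L] [FiniteDimensional ℝ L]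
    [LieAlgebra.IsSimple ℝ L]
    (h x : L) (hpair : IsOrthogonalPair h x) :
    InnConj h (-h) ∧ InnConj x (-x) := by
  obtain ⟨hh, hx, hhx⟩ := hpair
  set q := ⁅x, ⁅x, h⁆⁆
  set e := x + ⁅h, x⁆
  set f := x - ⁅h, x⁆
  have t : IsEulerSl2Triple q e f := isEulerSl2Triple_of_lie_lie_eq_self hx.isAdTripotent hhx
  have hhe : ⁅h, e⁆ = e := by rw [lie_add, hhx, add_comm]
  have hhf : ⁅h, f⁆ = -f := by rw [lie_sub, hhx, neg_sub]
  have he : ad ℝ L e ^ 3 = 0 := hh.isAdTripotent.ad_pow_three_eq_zero hhe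
  have hf : ad ℝ L f ^ 3 = 0 :=
    hh.isAdTripotent.neg.ad_pow_three_eq_zero (by rw [neg_lie, hhf, neg_neg])
  have hx_eq : x = (2⁻¹ : ℝ) • (e + f) := by simp only [e, f]; module
  have hq : IsEuler q := by
    let ψ := (expAd f (.mk _ 3 hf)).trans (expAd _ (.mk _ 3 (ad_smul_pow_three_eq_zero he (-2⁻¹))))
    have hψ : ψ x = -q := by
      rw [hx_eq, map_smul, LieEquiv.trans_apply, t.expAd_smul_expAd_add he hf]
      module
    simpa [hψ] using (hx.map ψ).neg
  have hqh : q = h := by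
    refine (sub_eq_zero.mp (hq.eq_zero_of_forall_lie_eq_zero fun m hm => ?_)).symm
    rw [sub_lie, t.lie_eq_lie_of_lie_lie_eq_self hh.isAdTripotent hq.isAdTripotent
      (lie_lie_lie_eq_zero_of_lie_lie_eq_self hhx) hhe hhf hm, sub_self]
  rw [hqh] at t
  have hweyl_x : weylAut e f he hf x = -x := by
    rw [hx_eq, map_smul, t.weylAut_apply_add he hf, smul_neg]
  exact ⟨t.weylAut_apply_q he hf ▸ innConj_weylAut he hf h, hweyl_x ▸ innConj_weylAut he hf x⟩
end

section
/- Let G = G↑ ∪ G↑τ be a group with a subgroup G↑ of index 2 and an involution τ ∈ G ∖ G↑, and let U be an (anti-)unitary representation of G on a complex Hilbert space H. Set M := {T ∈ B(H) : T U(g) = U(g) T for all g ∈ G↑} (the commutant of U(G↑)) and J := U(τ). Then for every unitary N ∈ M with J N J = N⁻¹ there exists a unique (anti-)unitary representation Ũ of G on H with Ũ|_{G↑} = U|_{G↑} and Ũ(τ) = N∘J, and the assignment N ↦ Ũ is a bijection from U(M)⁻ := {N ∈ M unitary : J N J = N⁻¹} onto the set of (anti-)unitary representations of G extending U|_{G↑}.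 -/
/-!
Every `g ∉ G↑` is `(g τ⁻¹) τ` with `g τ⁻¹ ∈ G↑`, so an extension `Ũ` of `U|_{G↑}` is determined
by `W = Ũ τ`, and a given `W` extends (by `Ũ g = U (g τ⁻¹) W` off `G↑`) exactly when
`W² = U (τ²)` and `W U(h) = U(τ h τ⁻¹) W` on `G↑`. Writing `W = N J` with `J = U τ`, the map
`N = W J` is unitary as a product of two antiunitaries, the second condition says that `N`
commutes with `U(G↑)`, and the first, as `τ² = 1`, says `J N J = N⁻¹`.
-/

variable {G : Type*} [Group G] {H : Type*}
  [NormedAddCommGroup H] [InnerProductSpace ℂ H] [CompleteSpace H]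

/-- An *(anti-)unitary representation* of a group `G` with distinguished index-two
subgroup `G↑` on a complex Hilbert space `H`: a homomorphism into the group of
`ℝ`-linear surjective isometries of `H` which is `ℂ`-linear (unitary) on `G↑` and
conjugate-linear (antiunitary) on `G ∖ G↑`. -/
def IsAntiUnitaryRep (Gup : Subgroup G) (U : G →* (H ≃ₗᵢ[ℝ] H)) : Prop :=
  (∀ g ∈ Gup, ∀ (c : ℂ) (z : H), U g (c • z) = c • U g z) ∧
    ∀ g ∉ Gup, ∀ (c : ℂ) (z : H), U g (c • z) = (starRingEnd ℂ) c • U g z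

namespace MonoidHom

variable {M : Type*} [Monoid M] {Gup : Subgroup G} {τ : G}

theorem ext_of_index_two (hindex : Gup.index = 2) (hτ : τ ∉ Gup) {f f' : G →* M}
    (hGup : ∀ g ∈ Gup, f g = f' g) (hτf : f τ = f' τ) : f = f' := by
  ext g
  by_cases hg : g ∈ Gup
  · exact hGup g hg
  · have hgτ : g * τ⁻¹ ∈ Gup :=
      (Subgroup.mul_mem_iff_of_index_two hindex).2 (iff_of_false hg (inv_mem_iff.not.2 hτ))
    calc f g = f (g * τ⁻¹) * f τ := by rw [← map_mul, inv_mul_cancel_right]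
      _ = f' (g * τ⁻¹) * f' τ := by rw [hGup _ hgτ, hτf]
      _ = f' g := by rw [← map_mul, inv_mul_cancel_right]

theorem map_mul_map_self_of_sq_eq_one (f : G →* M) (hτ2 : τ ^ 2 = 1) : f τ * f τ = 1 := by
  rw [← map_mul, ← sq, hτ2, map_one]

theorem mul_map_mul_map (f : G →* M) {n : M} (τ h : G) (hn : Commute n (f (τ * h * τ⁻¹))) :
    n * f τ * f h = f (τ * h * τ⁻¹) * (n * f τ) := by
  calc n * f τ * f h = n * f (τ * h * τ⁻¹) * f τ := by
        rw [mul_assoc, mul_assoc, ← map_mul, ← map_mul, inv_mul_cancel_right]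
    _ = f (τ * h * τ⁻¹) * (n * f τ) := by rw [hn.eq, mul_assoc]

theorem commute_map_mul_map_inv (hGup : Gup.Normal) {f f' : G →* M}
    (hff' : ∀ g ∈ Gup, f' g = f g) (τ : G) {g : G} (hg : g ∈ Gup) :
    Commute (f' τ * f τ⁻¹) (f g) := by
  have hconj : τ⁻¹ * g * τ ∈ Gup := by simpa using hGup.conj_mem g hg τ⁻¹
  calc f' τ * f τ⁻¹ * f g = f' τ * f (τ⁻¹ * g * τ) * f τ⁻¹ := by
        rw [mul_assoc, ← map_mul, mul_assoc (f' τ), ← map_mul]; group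
    _ = f' (τ * (τ⁻¹ * g * τ)) * f τ⁻¹ := by rw [← hff' _ hconj, ← map_mul]
    _ = f g * (f' τ * f τ⁻¹) := by
        rw [show τ * (τ⁻¹ * g * τ) = g * τ by group, map_mul, hff' g hg, mul_assoc]

open Classical in
noncomputable def extendOfIndexTwo (hindex : Gup.index = 2) (hτ : τ ∉ Gup) (f : G →* M)
    (W : M) (hW : W * W = f (τ ^ 2)) (hWf : ∀ h ∈ Gup, W * f h = f (τ * h * τ⁻¹) * W) :
    G →* M where
  toFun g := if g ∈ Gup then f g else f (g * τ⁻¹) * W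
  map_one' := by rw [if_pos Gup.one_mem, map_one]
  map_mul' a b := by
    have hmem {x y : G} : x * y ∈ Gup ↔ (x ∈ Gup ↔ y ∈ Gup) :=
      Subgroup.mul_mem_iff_of_index_two hindex
    have hτ' : τ⁻¹ ∉ Gup := inv_mem_iff.not.2 hτ
    by_cases ha : a ∈ Gup <;> by_cases hb : b ∈ Gup
    · simp only [ha, hb, Gup.mul_mem, if_true, map_mul]
    · rw [if_pos ha, if_neg hb, if_neg (by simp [hmem, ha, hb]), mul_assoc a, map_mul, mul_assoc]
    · rw [if_neg ha, if_pos hb, if_neg (by simp [hmem, ha, hb]), mul_assoc (f _), hWf b hb,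
        ← mul_assoc, ← map_mul]
      congr 2; group
    · have hbτ : b * τ⁻¹ ∈ Gup := hmem.2 (iff_of_false hb hτ')
      rw [if_neg ha, if_neg hb, if_pos (by simp [hmem, ha, hb]), mul_assoc, ← mul_assoc W,
        hWf _ hbτ, mul_assoc, hW, ← map_mul, ← map_mul]
      congr 1; group

section extendOfIndexTwo

variable {hindex : Gup.index = 2} {hτ : τ ∉ Gup} (f : G →* M) {W : M} {hW : W * W = f (τ ^ 2)}
  {hWf : ∀ h ∈ Gup, W * f h = f (τ * h * τ⁻¹) * W}

theorem extendOfIndexTwo_apply_of_mem {g : G} (hg : g ∈ Gup) :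
    f.extendOfIndexTwo hindex hτ W hW hWf g = f g :=
  if_pos hg

theorem extendOfIndexTwo_apply_of_not_mem {g : G} (hg : g ∉ Gup) :
    f.extendOfIndexTwo hindex hτ W hW hWf g = f (g * τ⁻¹) * W :=
  if_neg hg

theorem extendOfIndexTwo_apply_self : f.extendOfIndexTwo hindex hτ W hW hWf τ = W := by
  rw [extendOfIndexTwo_apply_of_not_mem f hτ, mul_inv_cancel, map_one, one_mul]

end extendOfIndexTwo

end MonoidHom

namespace LinearIsometryEquiv

variable {R S E F : Type*} [Semiring R] [Semiring S] [SeminormedAddCommGroup E]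
  [SeminormedAddCommGroup F] [Module R E] [Module R F] [Module S E] [Module S F]

variable (R) in
def restrictScalars [LinearMap.CompatibleSMul E F R S] (e : E ≃ₗᵢ[S] F) : E ≃ₗᵢ[R] F :=
  { e.toLinearEquiv.restrictScalars R with norm_map' := e.norm_map }

@[simp]
theorem restrictScalars_apply [LinearMap.CompatibleSMul E F R S] (e : E ≃ₗᵢ[S] F) (x : E) :
    e.restrictScalars R x = e x :=
  rfl

def ofMapSMul (e : E ≃ₗᵢ[R] F) (h : ∀ (c : S) (x : E), e (c • x) = c • e x) : E ≃ₗᵢ[S] F :=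
  { e with map_smul' := h }

@[simp]
theorem ofMapSMul_apply (e : E ≃ₗᵢ[R] F) (h : ∀ (c : S) (x : E), e (c • x) = c • e x) (x : E) :
    e.ofMapSMul h x = e x :=
  rfl

end LinearIsometryEquiv

section AntiUnitary

variable {E : Type*} [NormedAddCommGroup E] [InnerProductSpace ℂ E] {Gup : Subgroup G} {τ : G}

theorem LinearIsometryEquiv.commute_restrictScalars_iff {N : E ≃ₗᵢ[ℂ] E} {e : E ≃ₗᵢ[ℝ] E} :
    Commute (N.restrictScalars ℝ) e ↔ ∀ z, N (e z) = e (N z) :=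
  LinearIsometryEquiv.ext_iff

theorem LinearIsometryEquiv.restrictScalars_mul_mul_self {N : E ≃ₗᵢ[ℂ] E} {J : E ≃ₗᵢ[ℝ] E}
    (hJNJ : ∀ z, J (N (J z)) = N.symm z) :
    N.restrictScalars ℝ * J * (N.restrictScalars ℝ * J) = 1 := by
  ext z
  simp [hJNJ]

theorem LinearIsometryEquiv.restrictScalars_mul_map_mul_map (hGup : Gup.Normal)
    (U : G →* (E ≃ₗᵢ[ℝ] E)) {N : E ≃ₗᵢ[ℂ] E} (hN : ∀ g ∈ Gup, ∀ z, N (U g z) = U g (N z))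
    (τ : G) {h : G} (hh : h ∈ Gup) :
    N.restrictScalars ℝ * U τ * U h = U (τ * h * τ⁻¹) * (N.restrictScalars ℝ * U τ) :=
  U.mul_map_mul_map τ h (commute_restrictScalars_iff.2 (hN _ (hGup.conj_mem h hh τ)))

theorem MonoidHom.apply_apply_of_sq_eq_one (U : G →* (E ≃ₗᵢ[ℝ] E)) (hτ2 : τ ^ 2 = 1) (z : E) :
    U τ (U τ z) = z :=
  congrArg (· z) (U.map_mul_map_self_of_sq_eq_one hτ2)

theorem IsAntiUnitaryRep.mul_apply_smul_of_not_mem {U V : G →* (E ≃ₗᵢ[ℝ] E)}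
    (hV : IsAntiUnitaryRep Gup V) (hU : IsAntiUnitaryRep Gup U) {g g' : G} (hg : g ∉ Gup)
    (hg' : g' ∉ Gup) (c : ℂ) (z : E) : (V g * U g') (c • z) = c • (V g * U g') z := by
  simp only [LinearIsometryEquiv.coe_mul, Function.comp_apply, hU.2 g' hg', hV.2 g hg,
    Complex.conj_conj]

theorem isAntiUnitaryRep_extendOfIndexTwo (hindex : Gup.index = 2) (hτ : τ ∉ Gup)
    {U : G →* (E ≃ₗᵢ[ℝ] E)} (hU : IsAntiUnitaryRep Gup U) (N : E ≃ₗᵢ[ℂ] E)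
    (hW : N.restrictScalars ℝ * U τ * (N.restrictScalars ℝ * U τ) = U (τ ^ 2))
    (hWU : ∀ h ∈ Gup, N.restrictScalars ℝ * U τ * U h =
      U (τ * h * τ⁻¹) * (N.restrictScalars ℝ * U τ)) :
    IsAntiUnitaryRep Gup (U.extendOfIndexTwo hindex hτ _ hW hWU) := by
  refine ⟨fun g hg c z => ?_, fun g hg c z => ?_⟩
  · rw [U.extendOfIndexTwo_apply_of_mem hg]
    exact hU.1 g hg c z
  · have hgτ : g * τ⁻¹ ∈ Gup :=
      (Subgroup.mul_mem_iff_of_index_two hindex).2 (iff_of_false hg (inv_mem_iff.not.2 hτ))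
    simp only [U.extendOfIndexTwo_apply_of_not_mem hg, LinearIsometryEquiv.coe_mul,
      Function.comp_apply, LinearIsometryEquiv.restrictScalars_apply, hU.2 τ hτ, N.map_smul,
      hU.1 _ hgτ]

end AntiUnitary

/-- Let `G = G↑ ∪ G↑τ` with `G↑` of index two and `τ ∉ G↑` an
involution, and let `U` be an (anti-)unitary representation of `G` on `H`.  Set
`J := U τ`.  Then `N ↦ Ũ`, where `Ũ` is the unique (anti-)unitary extension of
`U|_{G↑}` with `Ũ τ = N ∘ J`, is a bijection from the unitaries `N` in the commutant of
`U(G↑)` satisfying `J N J = N⁻¹` onto the set of (anti-)unitary representations of `G`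
extending `U|_{G↑}`. -/
theorem antiunitary_extensions_param
    (Gup : Subgroup G) (hindex : Gup.index = 2)
    (τ : G) (hτ : τ ∉ Gup) (hτ2 : τ ^ 2 = 1)
    (U : G →* (H ≃ₗᵢ[ℝ] H)) (hU : IsAntiUnitaryRep Gup U) :
    (∀ N : H ≃ₗᵢ[ℂ] H,
      (∀ g ∈ Gup, ∀ z : H, N (U g z) = U g (N z)) →
      (∀ z : H, U τ (N (U τ z)) = N.symm z) →
      ∃! V : G →* (H ≃ₗᵢ[ℝ] H), IsAntiUnitaryRep Gup V ∧
        (∀ g ∈ Gup, V g = U g) ∧ ∀ z : H, V τ z = N (U τ z)) ∧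
    ∀ V : G →* (H ≃ₗᵢ[ℝ] H), IsAntiUnitaryRep Gup V → (∀ g ∈ Gup, V g = U g) →
      ∃! N : H ≃ₗᵢ[ℂ] H,
        (∀ g ∈ Gup, ∀ z : H, N (U g z) = U g (N z)) ∧
        (∀ z : H, U τ (N (U τ z)) = N.symm z) ∧
        ∀ z : H, V τ z = N (U τ z) := by
  have hnormal := Subgroup.normal_of_index_eq_two hindex
  have hτinv : τ⁻¹ = τ := inv_eq_of_mul_eq_one_right (by rw [← sq, hτ2])
  refine ⟨fun N hcomm hJNJ => ?_, fun V hV hVU => ?_⟩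
  · have hW : N.restrictScalars ℝ * U τ * (N.restrictScalars ℝ * U τ) = U (τ ^ 2) := by
      rw [hτ2, map_one]
      exact N.restrictScalars_mul_mul_self hJNJ
    have hWU (h : G) (hh : h ∈ Gup) := N.restrictScalars_mul_map_mul_map hnormal U hcomm τ hh
    refine ⟨U.extendOfIndexTwo hindex hτ _ hW hWU,
      ⟨isAntiUnitaryRep_extendOfIndexTwo hindex hτ hU N hW hWU,
        fun g hg => U.extendOfIndexTwo_apply_of_mem hg,
        fun z => by rw [U.extendOfIndexTwo_apply_self]; rfl⟩, ?_⟩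
    rintro V ⟨-, hVU, hVτ⟩
    refine MonoidHom.ext_of_index_two hindex hτ (fun g hg => ?_) ?_
    · rw [hVU g hg, U.extendOfIndexTwo_apply_of_mem hg]
    · rw [U.extendOfIndexTwo_apply_self]
      exact LinearIsometryEquiv.ext hVτ
  · set N : H ≃ₗᵢ[ℂ] H := (V τ * U τ).ofMapSMul (hV.mul_apply_smul_of_not_mem hU hτ hτ)
    have hUU := U.apply_apply_of_sq_eq_one hτ2
    have hVV := V.apply_apply_of_sq_eq_one hτ2
    refine ⟨N, ⟨fun g hg => ?_, fun z => ?_, fun z => ?_⟩, ?_⟩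
    · have hcomm := MonoidHom.commute_map_mul_map_inv hnormal hVU τ hg
      rw [hτinv] at hcomm
      exact N.commute_restrictScalars_iff.1 hcomm
    · rw [eq_comm, LinearIsometryEquiv.symm_apply_eq]
      simp [N, hUU, hVV]
    · simp [N, hUU]
    · rintro N' ⟨-, -, hN'⟩
      ext z
      simp [N, hN', hUU]
end
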